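/- arXiv:0707.1408 — 4 statements merged into one kernel-verified Lean document; each statement's English description precedes it below -/
import Mathlib

section
/- Let (A,+) be a finite abelian group, and let G be a closed, shift-invariant subgroup of A^M (where M = Z^D × N^E), with Haar measure η_G. Let Φ be a cellular automaton on A^M that is also a group endomorphism of A^M with Φ(G) ⊆ G. Then the pushforward Φ(η_G) equals η_G if and only if Φ(G) = G. -/
open MeasureTheory Pointwise

abbrev Grid (D E : ℕ) : Type := (Fin D → ℤ) × (Fin E → ℕ)

abbrev Cfg (A : Type*) (D E : ℕ) : Type _ := Grid D E → A

def shift {A : Type*} {D E : ℕ} (v : Grid D E) (a : Cfg A D E) : Cfg A D E :=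
  fun m => a (m + v)

def IsSubshift {A : Type*} [TopologicalSpace A] {D E : ℕ} (S : Set (Cfg A D E)) : Prop :=
  IsClosed S ∧ ∀ v : Grid D E, shift v '' S ⊆ S

def restrictB {A : Type*} {D E : ℕ} (B : Finset (Grid D E)) (a : Cfg A D E) : B → A :=
  fun x => a x

def TopMixing {A : Type*} {D E : ℕ} (Hs : Finset (Grid D E)) (S : Set (Cfg A D E)) : Prop :=
  ∀ B : Finset (Grid D E), ∀ b : Grid D E → (B → A),
    (∀ h ∈ Hs, ∃ s ∈ S, ∀ x : B, s x = b h x) →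
    ∃ N : ℕ, ∀ n > N, ∃ c ∈ S, ∀ h ∈ Hs, ∀ x : B, c ((x : Grid D E) + n • h) = b h x

def MeasMixing {A : Type*} [MeasurableSpace A] {D E : ℕ} (Hs : Finset (Grid D E))
    (μ : Measure (Cfg A D E)) : Prop :=
  ∀ B : Finset (Grid D E), ∀ b : Grid D E → (B → A),
    Filter.Tendsto
      (fun n : ℕ => μ (⋂ h ∈ Hs, {a : Cfg A D E | ∀ x : B, a ((x : Grid D E) + n • h) = b h x}))
      Filter.atTop (nhds (∏ h ∈ Hs, μ {a : Cfg A D E | ∀ x : B, a (x : Grid D E) = b h x}))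

def msupport {X : Type*} [TopologicalSpace X] [MeasurableSpace X] (μ : Measure X) : Set X :=
  {x | ∀ U : Set X, IsOpen U → x ∈ U → 0 < μ U}


section Aux
set_option linter.unusedSectionVars false
variable {A : Type*} [AddCommGroup A] [Fintype A] [TopologicalSpace A] [DiscreteTopology A]
  [MeasurableSpace A] [MeasurableSingletonClass A] {D E : ℕ}

lemma meas_addRight (g : Cfg A D E) : Measurable (fun x : Cfg A D E => x + g) := by
  rw [measurable_pi_iff]
  intro m
  exact (measurable_of_countable (fun a : A => a + g m)).comp (measurable_pi_apply m)

lemma meas_add2 : Measurable (fun p : Cfg A D E × Cfg A D E => p.1 + p.2) := by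
  rw [measurable_pi_iff]
  intro m
  have : (fun p : Cfg A D E × Cfg A D E => p.1 m + p.2 m)
      = (fun q : A × A => q.1 + q.2) ∘ (fun p => (p.1 m, p.2 m)) := rfl
  show Measurable (fun p : Cfg A D E × Cfg A D E => p.1 m + p.2 m)
  rw [this]
  apply (measurable_of_countable _).comp
  exact ((measurable_pi_apply m).comp measurable_fst).prodMk
      ((measurable_pi_apply m).comp measurable_snd)

lemma haar_unique (G : AddSubgroup (Cfg A D E)) (hG : MeasurableSet (G : Set (Cfg A D E)))
    (μ η : Measure (Cfg A D E)) [IsProbabilityMeasure μ] [IsProbabilityMeasure η]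
    (hμG : μ (G : Set (Cfg A D E)) = 1) (hηG : η (G : Set (Cfg A D E)) = 1)
    (hμinv : ∀ g ∈ G, Measure.map (fun x => x + g) μ = μ)
    (hηinv : ∀ g ∈ G, Measure.map (fun x => x + g) η = η) : μ = η := by
  have haeμ : ∀ᵐ x ∂μ, x ∈ G := by
    rw [ae_iff]
    have : μ (G : Set (Cfg A D E))ᶜ = 0 := by
      rw [measure_compl hG (by simp), hμG]; simp
    exact this
  have haeη : ∀ᵐ x ∂η, x ∈ G := by
    rw [ae_iff]
    have : η (G : Set (Cfg A D E))ᶜ = 0 := by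
      rw [measure_compl hG (by simp), hηG]; simp
    exact this
  ext s hs
  have ht : MeasurableSet ((fun p : Cfg A D E × Cfg A D E => p.1 + p.2) ⁻¹' s) :=
    meas_add2 hs
  have eq1 : (μ.prod η) ((fun p : Cfg A D E × Cfg A D E => p.1 + p.2) ⁻¹' s) = η s := by
    rw [Measure.prod_apply ht,
      lintegral_congr_ae (haeμ.mono fun x hx => ?_), lintegral_const, measure_univ, mul_one]
    have hpre : Prod.mk x ⁻¹' ((fun p : Cfg A D E × Cfg A D E => p.1 + p.2) ⁻¹' s)
        = (fun y => y + x) ⁻¹' s := by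
      ext y; simp [add_comm]
    rw [hpre, ← Measure.map_apply (meas_addRight x) hs, hηinv x hx]
  have eq2 : (μ.prod η) ((fun p : Cfg A D E × Cfg A D E => p.1 + p.2) ⁻¹' s) = μ s := by
    rw [Measure.prod_apply_symm ht,
      lintegral_congr_ae (haeη.mono fun y hy => ?_), lintegral_const, measure_univ, mul_one]
    have hpre : (fun x => (x, y)) ⁻¹' ((fun p : Cfg A D E × Cfg A D E => p.1 + p.2) ⁻¹' s)
        = (fun x => x + y) ⁻¹' s := rfl
    rw [hpre, ← Measure.map_apply (meas_addRight y) hs, hμinv y hy]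
  rw [← eq2, eq1]
end Aux


theorem stmt0 {A : Type*} [AddCommGroup A] [Fintype A]
    [TopologicalSpace A] [DiscreteTopology A]
    [MeasurableSpace A] [MeasurableSingletonClass A]
    {D E : ℕ}
    (G : AddSubgroup (Cfg A D E))
    (hGclosed : IsClosed (G : Set (Cfg A D E)))
    (hGshift : ∀ v : Grid D E, shift v '' (G : Set (Cfg A D E)) ⊆ G)
    (Φ : Cfg A D E → Cfg A D E)
    (hΦcont : Continuous Φ)
    (hΦshift : ∀ v : Grid D E, Φ ∘ shift v = shift v ∘ Φ)
    (hΦadd : ∀ x y : Cfg A D E, Φ (x + y) = Φ x + Φ y)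
    (hΦG : Φ '' (G : Set (Cfg A D E)) ⊆ (G : Set (Cfg A D E)))
    (η : Measure (Cfg A D E)) [IsProbabilityMeasure η]
    (hηG : η (G : Set (Cfg A D E)) = 1)
    (hηinv : ∀ g ∈ G, Measure.map (fun x => x + g) η = η) :
    Measure.map Φ η = η ↔ Φ '' (G : Set (Cfg A D E)) = (G : Set (Cfg A D E)) := by
  classical
  have hΦmeas : Measurable Φ := hΦcont.measurable
  have hGmeas : MeasurableSet (G : Set (Cfg A D E)) := hGclosed.measurableSet
  have hΦ0 : Φ 0 = 0 := by
    have := hΦadd 0 0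
    simpa using this.symm
  constructor
  · intro h
    apply Set.Subset.antisymm hΦG
    intro g hg
    by_contra hgH
    -- H = Φ '' G is a closed subgroup with full measure; g + H is a disjoint translate
    set H : Set (Cfg A D E) := Φ '' (G : Set (Cfg A D E)) with hHdef
    have hHcompact : IsCompact H := (hGclosed.isCompact).image hΦcont
    have hHmeas : MeasurableSet H := hHcompact.isClosed.measurableSet
    have hηH : η H = 1 := by
      have h1 : (1 : ENNReal) ≤ η H := by
        calc (1 : ENNReal) = η (G : Set (Cfg A D E)) := hηG.symm
        _ ≤ η (Φ ⁻¹' H) := measure_mono (fun x hx => Set.mem_image_of_mem Φ hx)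
        _ = (Measure.map Φ η) H := (Measure.map_apply hΦmeas hHmeas).symm
        _ = η H := by rw [h]
      exact le_antisymm prob_le_one h1
    have hKmeas : MeasurableSet ((fun x => x + (-g)) ⁻¹' H) := meas_addRight (-g) hHmeas
    have hηK : η ((fun x => x + (-g)) ⁻¹' H) = 1 := by
      rw [← Measure.map_apply (meas_addRight (-g)) hHmeas, hηinv (-g) (neg_mem hg), hηH]
    have hdisj : Disjoint ((fun x => x + (-g)) ⁻¹' H) H := by
      rw [Set.disjoint_left]
      rintro x hxK hxH
      apply hgH
      obtain ⟨a, ha, hax⟩ := hxH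
      obtain ⟨b, hb, hbx⟩ := hxK
      have : g = Φ (a - b) := by
        have : Φ a - Φ b = x - (x + (-g)) := by rw [hax, hbx]
        have h2 : Φ (a - b) = Φ a - Φ b := by
          have := hΦadd (a - b) b
          simp only [sub_add_cancel] at this
          rw [this]; abel
        rw [h2, this]; abel
      rw [this]
      exact Set.mem_image_of_mem Φ (sub_mem ha hb)
    have : η (((fun x => x + (-g)) ⁻¹' H) ∪ H) = 2 := by
      rw [measure_union hdisj hHmeas, hηK, hηH]; norm_num
    have hle : η (((fun x => x + (-g)) ⁻¹' H) ∪ H) ≤ 1 := prob_le_one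
    rw [this] at hle
    norm_num at hle
  · intro h
    have : IsProbabilityMeasure (Measure.map Φ η) :=
      Measure.isProbabilityMeasure_map hΦmeas.aemeasurable
    refine haar_unique G hGmeas _ η ?_ hηG ?_ hηinv
    · refine le_antisymm prob_le_one ?_
      calc (1 : ENNReal) = η (G : Set (Cfg A D E)) := hηG.symm
      _ ≤ η (Φ ⁻¹' (G : Set (Cfg A D E))) :=
          measure_mono (fun x hx => hΦG (Set.mem_image_of_mem Φ hx))
      _ = (Measure.map Φ η) G := (Measure.map_apply hΦmeas hGmeas).symm
    · intro g hg
      have hgmem : g ∈ Φ '' (G : Set (Cfg A D E)) := by rw [h]; exact hg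
      obtain ⟨g', hg', hgg'⟩ := hgmem
      have hcomp : (fun x => x + g) ∘ Φ = Φ ∘ (fun x => x + g') := by
        funext x
        simp only [Function.comp_apply, hΦadd, hgg']
      rw [Measure.map_map (meas_addRight g) hΦmeas, hcomp,
        ← Measure.map_map hΦmeas (meas_addRight g'), hηinv g' hg']
end

section
/- Let R be a commutative ring of prime characteristic p, A an R-module, M = Z^D × N^E, and let Φ be the R-linear cellular automaton with Φ = Σ_{h∈H} φ_h σ^h for a finite set H ⊂ M and coefficients φ_h ∈ R. Then for every k ∈ N, Φ^{p^k} = Σ_{h∈H} φ_h^{p^k} σ^{p^k h}. -/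
open MeasureTheory Pointwise

section Aux

variable {R A : Type*} [CommRing R] [AddCommMonoid A] [Module R A] {D E : ℕ}

/-- Apply an element of the group algebra as a (generalized) cellular automaton. -/
noncomputable def caApply (f : AddMonoidAlgebra R (Grid D E)) (a : Cfg A D E) : Cfg A D E :=
  fun m => f.coeff.sum fun g r => r • a (m + g)

lemma caApply_zero (a : Cfg A D E) :
    caApply (0 : AddMonoidAlgebra R (Grid D E)) a = fun _ => 0 := by
  funext m; simp [caApply]

lemma caApply_add (f g : AddMonoidAlgebra R (Grid D E)) (a : Cfg A D E) :
    caApply (f + g) a = caApply f a + caApply g a := by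
  funext m
  simp only [caApply, Pi.add_apply, AddMonoidAlgebra.coeff_add]
  exact Finsupp.sum_add_index (by simp) (by intro _ _ _ _; rw [add_smul])

lemma caApply_single (g : Grid D E) (r : R) (a : Cfg A D E) :
    caApply (AddMonoidAlgebra.single g r) a = fun m => r • a (m + g) := by
  funext m
  simp [caApply, Finsupp.sum_single_index]

lemma caApply_mul (f g : AddMonoidAlgebra R (Grid D E)) (a : Cfg A D E) :
    caApply (f * g) a = caApply f (caApply g a) := by
  induction f using AddMonoidAlgebra.induction_linear with
  | zero => rw [zero_mul, caApply_zero, caApply_zero]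
  | add f₁ f₂ h₁ h₂ => rw [add_mul, caApply_add, caApply_add, h₁, h₂]
  | single g₀ r =>
    induction g using AddMonoidAlgebra.induction_linear with
    | zero =>
      rw [mul_zero, caApply_zero, caApply_single]
      funext m; simp
    | add g₁ g₂ h₁ h₂ =>
      rw [mul_add, caApply_add, caApply_add, h₁, h₂, caApply_single, caApply_single,
        caApply_single]
      funext m; simp [smul_add]
    | single g₁ r' =>
      rw [AddMonoidAlgebra.single_mul_single, caApply_single, caApply_single, caApply_single]
      funext m
      simp [mul_smul, add_assoc]

lemma caApply_pow (f : AddMonoidAlgebra R (Grid D E)) (n : ℕ) (a : Cfg A D E) :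
    caApply (f ^ n) a = (caApply f)^[n] a := by
  induction n generalizing a with
  | zero =>
    rw [pow_zero, AddMonoidAlgebra.one_def, caApply_single]
    funext m; simp
  | succ n ih =>
    rw [Function.iterate_succ_apply', pow_succ', caApply_mul, ih]

lemma caApply_sum {ι : Type*} (s : Finset ι) (f : ι → AddMonoidAlgebra R (Grid D E))
    (a : Cfg A D E) : caApply (∑ i ∈ s, f i) a = ∑ i ∈ s, caApply (f i) a := by
  classical
  induction s using Finset.induction_on with
  | empty => simp only [Finset.sum_empty]; exact caApply_zero a
  | insert x s hx ih =>
    rw [Finset.sum_insert hx, Finset.sum_insert hx, caApply_add, ih]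

lemma ama_charP {p : ℕ} [CharP R p] : CharP (AddMonoidAlgebra R (Grid D E)) p :=
  ⟨fun n => by
    rw [AddMonoidAlgebra.natCast_def, AddMonoidAlgebra.single_eq_zero,
      CharP.cast_eq_zero_iff R p]⟩

end Aux

theorem stmt3 {R A : Type*} [CommRing R] [AddCommMonoid A] [Module R A]
    {p : ℕ} [Fact p.Prime] [CharP R p]
    {D E : ℕ} (H : Finset (Grid D E)) (φ : Grid D E → R) (k : ℕ)
    (a : Cfg A D E) :
    (fun c : Cfg A D E => fun m => ∑ h ∈ H, φ h • c (m + h))^[p ^ k] a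
      = fun m => ∑ h ∈ H, ((φ h) ^ (p ^ k)) • a (m + (p ^ k) • h) := by
  classical
  haveI : CharP (AddMonoidAlgebra R (Grid D E)) p := ama_charP
  set x : AddMonoidAlgebra R (Grid D E) := ∑ h ∈ H, AddMonoidAlgebra.single h (φ h) with hxdef
  have hx : (fun c : Cfg A D E => fun m => ∑ h ∈ H, φ h • c (m + h))
      = caApply (A := A) x := by
    funext b
    rw [hxdef, caApply_sum]
    funext m
    simp [caApply_single]
  have key : x ^ (p ^ k) = ∑ h ∈ H, AddMonoidAlgebra.single ((p ^ k) • h) (φ h ^ (p ^ k)) := by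
    rw [hxdef, sum_pow_char_pow]
    exact Finset.sum_congr rfl fun h _ => AddMonoidAlgebra.single_pow _ _ _
  rw [hx, ← caApply_pow, key, caApply_sum]
  funext m
  rw [Finset.sum_apply]
  exact Finset.sum_congr rfl fun h _ => by rw [caApply_single]
end

section
/- Let R be a finite commutative ring of prime characteristic p, A a finite R-module, Φ = Σ_{h∈H} φ_h σ^h an R-linear CA on A^M, and let φ̄_k := (Σ_{h∈H} φ_h^{p^k}) − 1 for k ∈ N. Let F_Φ ⊆ R be the set of values appearing infinitely often in the sequence (φ̄_k). Let S ⊂ A^M be a submodule shift and C a topologically H-mixing, Φ-invariant coset of S which is a subshift. Then φ̄ · C ⊆ S for every φ̄ ∈ F_Φ. -/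
open MeasureTheory Pointwise

def shiftL (R : Type*) {A : Type*} [CommRing R] [AddCommGroup A] [Module R A] {D E : ℕ}
    (v : Grid D E) : Cfg A D E →ₗ[R] Cfg A D E where
  toFun := shift v
  map_add' _ _ := rfl
  map_smul' _ _ := rfl

def shiftHom (R A : Type*) [CommRing R] [AddCommGroup A] [Module R A] (D E : ℕ) :
    Multiplicative (Grid D E) →* Module.End R (Cfg A D E) where
  toFun v := shiftL R v.toAdd
  map_one' := by ext a m; show a (m + 0) = a m; rw [add_zero]
  map_mul' x y := by
    ext a m
    show a (m + (x.toAdd + y.toAdd)) = a (m + x.toAdd + y.toAdd)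
    rw [add_assoc]

lemma pow_formula {R A : Type*} [CommRing R] [AddCommGroup A] [Module R A]
    {p : ℕ} [Fact p.Prime] [CharP R p] {D E : ℕ}
    (H : Finset (Grid D E)) (φ : Grid D E → R) (Φ : Cfg A D E → Cfg A D E)
    (hΦ : ∀ a m, Φ a m = ∑ h ∈ H, φ h • a (m + h)) (k : ℕ) (a : Cfg A D E) (m : Grid D E) :
    Φ^[p ^ k] a m = ∑ h ∈ H, (φ h) ^ (p ^ k) • a (m + (p ^ k) • h) := by
  classical
  set T := AddMonoidAlgebra.lift R (Module.End R (Cfg A D E)) (Grid D E) (shiftHom R A D E)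
    with hT
  have hTs : ∀ (v : Grid D E) (r : R) (a : Cfg A D E) (m : Grid D E),
      T (AddMonoidAlgebra.single v r) a m = r • a (m + v) := by
    intro v r a m
    rw [hT, AddMonoidAlgebra.lift_single]
    rfl
  set f : AddMonoidAlgebra R (Grid D E) := ∑ h ∈ H, AddMonoidAlgebra.single h (φ h) with hf
  have hTf : ⇑(T f) = Φ := by
    funext a; funext m
    rw [hΦ, hf, map_sum, LinearMap.coe_sum, Finset.sum_apply, Finset.sum_apply]
    exact Finset.sum_congr rfl fun h _ => hTs h (φ h) a m
  haveI hchar : CharP (AddMonoidAlgebra R (Grid D E)) p :=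
    charP_of_injective_ringHom
      (f := (AddMonoidAlgebra.singleZeroRingHom : R →+* AddMonoidAlgebra R (Grid D E)))
      (AddMonoidAlgebra.single_right_injective (m := (0 : Grid D E))) p
  have hfq : f ^ (p ^ k) = ∑ h ∈ H, AddMonoidAlgebra.single ((p ^ k) • h) ((φ h) ^ (p ^ k)) := by
    rw [hf, sum_pow_char_pow]
    exact Finset.sum_congr rfl fun h _ => AddMonoidAlgebra.single_pow _ _ _
  have h1 : Φ^[p ^ k] a = (T f ^ (p ^ k)) a := by
    rw [Module.End.pow_apply, hTf]
  rw [h1, ← map_pow, hfq, map_sum, LinearMap.coe_sum, Finset.sum_apply, Finset.sum_apply]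
  exact Finset.sum_congr rfl fun h _ => hTs _ _ a m

theorem stmt6 {R A : Type*} [CommRing R] [Finite R]
    [AddCommGroup A] [Module R A] [Finite A]
    [TopologicalSpace A] [DiscreteTopology A]
    {p : ℕ} [Fact p.Prime] [CharP R p]
    {D E : ℕ} (H : Finset (Grid D E))
    (φ : Grid D E → R)
    (Φ : Cfg A D E → Cfg A D E)
    (hΦ : ∀ a m, Φ a m = ∑ h ∈ H, φ h • a (m + h))
    (φbar : ℕ → R) (hφbar : ∀ k, φbar k = (∑ h ∈ H, (φ h) ^ (p ^ k)) - 1)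
    (S : Set (Cfg A D E)) (hSsub : IsSubshift S)
    (hSmod : ∃ N : Submodule R (Cfg A D E), (N : Set (Cfg A D E)) = S)
    (c₀ : Cfg A D E) (C : Set (Cfg A D E))
    (hC : C = (fun s => c₀ + s) '' S)
    (hCsub : IsSubshift C) (hCmix : TopMixing H C) (hCinv : Φ '' C ⊆ C)
    (ψ : R) (hψ : ∀ N : ℕ, ∃ k ≥ N, φbar k = ψ) :
    ∀ c ∈ C, ψ • c ∈ S := by
  classical
  obtain ⟨Smod, hSmodS⟩ := hSmod
  intro c hc
  have hp1 : 1 < p := (Fact.out (p := p.Prime)).one_lt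
  have key : ∀ B : Finset (Grid D E), ∃ d ∈ C, ∀ x ∈ B, d x = (ψ + 1) • c x := by
    intro B
    obtain ⟨N, hN⟩ := hCmix B (fun _ => restrictB B c)
      (fun h _ => ⟨c, hc, fun x => rfl⟩)
    obtain ⟨k, hk, hkψ⟩ := hψ (N + 1)
    have hq : p ^ k > N := by
      have h1 : k < p ^ k := Nat.lt_pow_self hp1
      omega
    obtain ⟨c', hc'C, hc'⟩ := hN (p ^ k) hq
    have hiter : ∀ n (a : Cfg A D E), a ∈ C → Φ^[n] a ∈ C := by
      intro n
      induction n with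
      | zero => intro a ha; exact ha
      | succ n ih =>
        intro a ha
        rw [Function.iterate_succ_apply']
        exact hCinv ⟨_, ih a ha, rfl⟩
    refine ⟨Φ^[p ^ k] c', hiter _ c' hc'C, ?_⟩
    intro x hx
    rw [pow_formula H φ Φ hΦ k]
    have hsum : ∀ h ∈ H, (φ h) ^ (p ^ k) • c' (x + (p ^ k) • h)
        = (φ h) ^ (p ^ k) • c x := by
      intro h hh
      rw [hc' h hh ⟨x, hx⟩]
      rfl
    rw [Finset.sum_congr rfl hsum, ← Finset.sum_smul]
    congr 1
    exact eq_add_of_sub_eq ((hφbar k).symm.trans hkψ)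
  have hmem : (ψ + 1) • c ∈ C := by
    have hcl : (ψ + 1) • c ∈ closure C := by
      rw [mem_closure_iff]
      intro U hU hxU
      obtain ⟨I, u, hu, hsub⟩ := isOpen_pi_iff.mp hU _ hxU
      obtain ⟨d, hdC, hd⟩ := key I
      refine ⟨d, hsub fun i hi => ?_, hdC⟩
      rw [hd i hi]
      exact (hu i hi).2
    rwa [hCsub.1.closure_eq] at hcl
  rw [hC] at hmem hc
  obtain ⟨s₁, hs₁, he₁⟩ := hmem
  obtain ⟨s₂, hs₂, he₂⟩ := hc
  have hident : ψ • c = s₁ - s₂ := by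
    calc ψ • c = (ψ + 1) • c - c := by
          rw [add_smul, one_smul, add_sub_cancel_right]
      _ = (c₀ + s₁) - (c₀ + s₂) := by rw [← he₁, ← he₂]
      _ = s₁ - s₂ := by abel
  rw [hident, ← hSmodS]
  rw [← hSmodS] at hs₁ hs₂
  exact Submodule.sub_mem _ hs₁ hs₂
end

section
/- Let A = R = Z/p with p prime and M = Z or M = N. Then A^M contains no proper infinite subgroup shift; that is, every closed shift-invariant subgroup of (Z/p)^M is either finite or equal to all of (Z/p)^M. -/
open MeasureTheory Pointwise

def shiftG {A : Type*} {M : Type*} [AddCommMonoid M] (v : M) (a : M → A) : M → A :=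
  fun m => a (m + v)

instance (n : ℕ) : TopologicalSpace (ZMod n) := ⊥

lemma zmod_sub (p : ℕ) (hp : p.Prime) (W : AddSubgroup (ZMod p)) :
    (∀ a ∈ W, a = 0) ∨ (∀ a : ZMod p, a ∈ W) := by
  by_cases h : ∀ a ∈ W, a = 0
  · exact Or.inl h
  · right
    push_neg at h
    obtain ⟨a, haW, ha⟩ := h
    haveI : Fact p.Prime := ⟨hp⟩
    intro b
    have key : ((b * a⁻¹).val : ZMod p) * a = b := by
      rw [ZMod.natCast_val, ZMod.cast_id]
      field_simp
    have := AddSubgroup.nsmul_mem W haW (b * a⁻¹).val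
    rwa [nsmul_eq_mul, key] at this

lemma natFinite (p : ℕ) (hp : p.Prime) (S : AddSubgroup (ℕ → ZMod p))
    (hshift : ∀ s ∈ S, ∀ v : ℕ, (fun n => s (n + v)) ∈ S)
    (m : ℕ)
    (hPm : ∀ b : ℕ → ZMod p, ∃ s ∈ S, ∀ i < m, s i = b i)
    (hm : ¬ ∀ b : ℕ → ZMod p, ∃ s ∈ S, ∀ i < m + 1, s i = b i) :
    (S : Set (ℕ → ZMod p)).Finite := by
  classical
  haveI : Fact p.Prime := ⟨hp⟩
  set W : AddSubgroup (ZMod p) :=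
    { carrier := {a | ∃ s ∈ S, (∀ i < m, s i = 0) ∧ s m = a}
      zero_mem' := ⟨0, S.zero_mem, fun i _ => rfl, rfl⟩
      add_mem' := by
        rintro x y ⟨s, hsS, hs0, rfl⟩ ⟨t, htS, ht0, rfl⟩
        exact ⟨s + t, S.add_mem hsS htS,
          fun i hi => by simp [hs0 i hi, ht0 i hi], rfl⟩
      neg_mem' := by
        rintro x ⟨s, hsS, hs0, rfl⟩
        exact ⟨-s, S.neg_mem hsS, fun i hi => by simp [hs0 i hi], rfl⟩ } with hWdef
  rcases zmod_sub p hp W with hW | hW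
  · -- W trivial: S finite
    have hrule : ∀ s ∈ S, ∀ n : ℕ, (∀ i < m, s (n + i) = 0) → s (n + m) = 0 := by
      intro s hsS n h0
      have ht : (fun j => s (j + n)) ∈ S := hshift s hsS n
      have : s (m + n) = 0 := by
        refine hW _ ⟨_, ht, fun i hi => ?_, rfl⟩
        rw [add_comm i n]; exact h0 i hi
      rwa [add_comm n m]
    have hzero : ∀ s ∈ S, (∀ i < m, s i = 0) → ∀ n, s n = 0 := by
      intro s hsS h0 n
      induction n using Nat.strong_induction_on with
      | _ n ih =>
        by_cases hn : n < m
        · exact h0 n hn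
        · push_neg at hn
          have := hrule s hsS (n - m) (fun i hi => ih (n - m + i) (by omega))
          rwa [Nat.sub_add_cancel hn] at this
    have hinj : Set.InjOn (fun s : ℕ → ZMod p => (fun i : Fin m => s i)) (S : Set _) := by
      intro s hsS t htS h
      funext n
      have hd : s - t ∈ S := S.sub_mem hsS htS
      have h0 : ∀ i < m, (s - t) i = 0 := by
        intro i hi
        have := congrFun h ⟨i, hi⟩
        simpa [sub_eq_zero] using this
      have := hzero _ hd h0 n
      simpa [sub_eq_zero] using this
    exact Set.Finite.of_finite_image (Set.toFinite _) hinj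
  · -- W full: contradiction with hm
    exfalso
    apply hm
    intro b
    obtain ⟨s, hsS, hsb⟩ := hPm b
    obtain ⟨t, htS, ht0, htm⟩ := hW (b m - s m)
    refine ⟨s + t, S.add_mem hsS htS, fun i hi => ?_⟩
    rcases Nat.lt_succ_iff_lt_or_eq.mp hi with h | rfl
    · simp [hsb i h, ht0 i h]
    · simp [htm]

lemma intFinite (p : ℕ) (hp : p.Prime) (S : AddSubgroup (ℤ → ZMod p))
    (hshift : ∀ s ∈ S, ∀ v : ℤ, (fun n => s (n + v)) ∈ S)
    (m : ℕ)
    (hPm : ∀ b : ℤ → ZMod p, ∃ s ∈ S, ∀ i : ℕ, i < m → s i = b i)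
    (hm : ¬ ∀ b : ℤ → ZMod p, ∃ s ∈ S, ∀ i : ℕ, i < m + 1 → s i = b i) :
    (S : Set (ℤ → ZMod p)).Finite := by
  classical
  haveI : Fact p.Prime := ⟨hp⟩
  set W : AddSubgroup (ZMod p) :=
    { carrier := {a | ∃ s ∈ S, (∀ i : ℕ, i < m → s i = 0) ∧ s m = a}
      zero_mem' := ⟨0, S.zero_mem, fun i _ => rfl, rfl⟩
      add_mem' := by
        rintro x y ⟨s, hsS, hs0, rfl⟩ ⟨t, htS, ht0, rfl⟩
        exact ⟨s + t, S.add_mem hsS htS,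
          fun i hi => by simp [hs0 i hi, ht0 i hi], rfl⟩
      neg_mem' := by
        rintro x ⟨s, hsS, hs0, rfl⟩
        exact ⟨-s, S.neg_mem hsS, fun i hi => by simp [hs0 i hi], rfl⟩ } with hWdef
  rcases zmod_sub p hp W with hW | hW
  swap
  · -- W full: contradiction with hm
    exfalso
    apply hm
    intro b
    obtain ⟨s, hsS, hsb⟩ := hPm b
    obtain ⟨t, htS, ht0, htm⟩ := hW (b m - s m)
    refine ⟨s + t, S.add_mem hsS htS, fun i hi => ?_⟩
    rcases Nat.lt_succ_iff_lt_or_eq.mp hi with h | rfl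
    · simp [hsb i h, ht0 i h]
    · simp [htm]
  set W' : AddSubgroup (ZMod p) :=
    { carrier := {a | ∃ s ∈ S, (∀ i : ℕ, i < m → s (1 + i) = 0) ∧ s 0 = a}
      zero_mem' := ⟨0, S.zero_mem, fun i _ => rfl, rfl⟩
      add_mem' := by
        rintro x y ⟨s, hsS, hs0, rfl⟩ ⟨t, htS, ht0, rfl⟩
        exact ⟨s + t, S.add_mem hsS htS,
          fun i hi => by simp [hs0 i hi, ht0 i hi], rfl⟩
      neg_mem' := by
        rintro x ⟨s, hsS, hs0, rfl⟩
        exact ⟨-s, S.neg_mem hsS, fun i hi => by simp [hs0 i hi], rfl⟩ } with hW'def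
  rcases zmod_sub p hp W' with hW' | hW'
  swap
  · -- W' full: contradiction with hm
    exfalso
    apply hm
    intro b
    obtain ⟨t, htS, htb⟩ := hPm (fun j => b (j + 1))
    have hs1S : (fun j => t (j + (-1))) ∈ S := hshift t htS (-1)
    obtain ⟨u, huS, hu0, hu0'⟩ := hW' (b 0 - t ((0:ℤ) + (-1)))
    refine ⟨(fun j => t (j + (-1))) + u, S.add_mem hs1S huS, fun i hi => ?_⟩
    match i with
    | 0 => simp [hu0']
    | (i' + 1) =>
      have hi' : i' < m := by omega
      have h1 : ((i' + 1 : ℕ) : ℤ) + (-1) = (i' : ℤ) := by push_cast; ring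
      have h2 : ((i' + 1 : ℕ) : ℤ) = 1 + (i' : ℤ) := by push_cast; ring
      have h3 : (i' : ℤ) + 1 = ((i' + 1 : ℕ) : ℤ) := by push_cast; ring
      have := htb i' hi'
      simp only [Pi.add_apply]
      rw [h1, this, h3, h2, hu0 i' hi', add_zero]
  · -- both trivial: finite
    have hfwd : ∀ s ∈ S, ∀ n : ℤ, (∀ i : ℕ, i < m → s (n + i) = 0) → s (n + m) = 0 := by
      intro s hsS n h0
      have ht : (fun j => s (j + n)) ∈ S := hshift s hsS n
      have : s ((m : ℤ) + n) = 0 := by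
        refine hW _ ⟨_, ht, fun i hi => ?_, rfl⟩
        rw [add_comm (i : ℤ) n]; exact h0 i hi
      rwa [add_comm (m : ℤ) n] at this
    have hbwd : ∀ s ∈ S, ∀ n : ℤ, (∀ i : ℕ, i < m → s (n + 1 + i) = 0) → s n = 0 := by
      intro s hsS n h0
      have ht : (fun j => s (j + n)) ∈ S := hshift s hsS n
      have : ((0 : ℤ) + n) = n := by ring
      refine this ▸ (hW' _ ⟨_, ht, fun i hi => ?_, rfl⟩)
      have : (1 : ℤ) + i + n = n + 1 + i := by ring
      rw [this]; exact h0 i hi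
    have hzero : ∀ s ∈ S, (∀ i : ℕ, i < m → s i = 0) → ∀ n : ℤ, s n = 0 := by
      intro s hsS h0
      have stepA : ∀ j : ℕ, s j = 0 := by
        intro j
        induction j using Nat.strong_induction_on with
        | _ j ih =>
          by_cases hj : j < m
          · exact h0 j hj
          · push_neg at hj
            have hwin : ∀ i : ℕ, i < m → s (((j - m : ℕ) : ℤ) + i) = 0 := by
              intro i hi
              have hc : ((j - m : ℕ) : ℤ) + (i : ℤ) = ((j - m + i : ℕ) : ℤ) := by push_cast; ring
              rw [hc]; exact ih (j - m + i) (by omega)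
            have := hfwd s hsS ((j - m : ℕ) : ℤ) hwin
            have hc : ((j - m : ℕ) : ℤ) + (m : ℤ) = (j : ℤ) := by
              omega
            rwa [hc] at this
      have stepB : ∀ d : ℕ, ∀ n : ℤ, -(d : ℤ) ≤ n → s n = 0 := by
        intro d
        induction d with
        | zero =>
          intro n hn
          have : n = ((n.toNat : ℕ) : ℤ) := by omega
          rw [this]; exact stepA n.toNat
        | succ d ih =>
          intro n hn
          by_cases hd : -(d : ℤ) ≤ n
          · exact ih n hd
          · apply hbwd s hsS n
            intro i hi
            exact ih (n + 1 + i) (by omega)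
      intro n
      exact stepB n.natAbs n (by omega)
    have hinj : Set.InjOn (fun s : ℤ → ZMod p => (fun i : Fin m => s (i : ℕ))) (S : Set _) := by
      intro s hsS t htS h
      funext n
      have hd : s - t ∈ S := S.sub_mem hsS htS
      have h0 : ∀ i : ℕ, i < m → (s - t) i = 0 := by
        intro i hi
        have := congrFun h ⟨i, hi⟩
        simpa [sub_eq_zero] using this
      have := hzero _ hd h0 n
      simpa [sub_eq_zero] using this
    exact Set.Finite.of_finite_image (Set.toFinite _) hinj

theorem stmt9 (p : ℕ) (hp : p.Prime) :
    (∀ S : AddSubgroup (ℤ → ZMod p), IsClosed (S : Set (ℤ → ZMod p)) →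
      (∀ v : ℤ, shiftG v '' (S : Set (ℤ → ZMod p)) ⊆ S) →
      (S : Set (ℤ → ZMod p)).Finite ∨ S = ⊤) ∧
    (∀ S : AddSubgroup (ℕ → ZMod p), IsClosed (S : Set (ℕ → ZMod p)) →
      (∀ v : ℕ, shiftG v '' (S : Set (ℕ → ZMod p)) ⊆ S) →
      (S : Set (ℕ → ZMod p)).Finite ∨ S = ⊤) := by
  classical
  constructor
  · -- ℤ case
    intro S hc hs
    have hshift : ∀ s ∈ S, ∀ v : ℤ, (fun n => s (n + v)) ∈ S := by
      intro s hsS v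
      exact hs v ⟨s, hsS, rfl⟩
    by_cases hfull : ∀ k : ℕ, ∀ b : ℤ → ZMod p, ∃ s ∈ S, ∀ i : ℕ, i < k → s i = b i
    · right
      rw [AddSubgroup.eq_top_iff']
      intro x
      have happrox : ∀ k : ℕ, ∃ c ∈ S, ∀ n : ℤ, n.natAbs ≤ k → c n = x n := by
        intro k
        obtain ⟨s, hsS, hsx⟩ := hfull (2 * k + 1) (fun j => x (j - k))
        refine ⟨fun n => s (n + k), hshift s hsS k, fun n hn => ?_⟩
        have h1 : (((n + k).toNat : ℕ) : ℤ) = n + k := by omega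
        have h2 : (n + k).toNat < 2 * k + 1 := by omega
        have := hsx _ h2
        rw [h1] at this
        simpa using this
      choose c hcS hcx using happrox
      have hx : Filter.Tendsto c Filter.atTop (nhds x) := by
        rw [tendsto_pi_nhds]
        intro i
        refine tendsto_const_nhds.congr' ?_
        filter_upwards [Filter.eventually_ge_atTop i.natAbs] with k hk
        exact (hcx k i hk).symm
      exact hc.mem_of_tendsto hx (Filter.Eventually.of_forall hcS)
    · left
      have hne : ∃ k, ¬ ∀ b : ℤ → ZMod p, ∃ s ∈ S, ∀ i : ℕ, i < k → s i = b i :=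
        not_forall.mp hfull
      have hm := Nat.find_spec hne
      have hpos : 0 < Nat.find hne := by
        rcases Nat.eq_zero_or_pos (Nat.find hne) with h | h
        · exfalso; apply hm; rw [h]
          exact fun b => ⟨0, S.zero_mem, fun i hi => absurd hi (Nat.not_lt_zero i)⟩
        · exact h
      have hPm : ∀ b : ℤ → ZMod p, ∃ s ∈ S, ∀ i : ℕ, i < Nat.find hne - 1 → s i = b i :=
        not_not.mp (Nat.find_min hne (by omega))
      have hsucc : Nat.find hne - 1 + 1 = Nat.find hne := by omega
      exact intFinite p hp S hshift (Nat.find hne - 1) hPm (hsucc ▸ hm)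
  · -- ℕ case
    intro S hc hs
    have hshift : ∀ s ∈ S, ∀ v : ℕ, (fun n => s (n + v)) ∈ S := by
      intro s hsS v
      exact hs v ⟨s, hsS, rfl⟩
    by_cases hfull : ∀ k : ℕ, ∀ b : ℕ → ZMod p, ∃ s ∈ S, ∀ i < k, s i = b i
    · right
      rw [AddSubgroup.eq_top_iff']
      intro x
      choose s hsS hsx using fun k => hfull k x
      have hx : Filter.Tendsto s Filter.atTop (nhds x) := by
        rw [tendsto_pi_nhds]
        intro i
        refine tendsto_const_nhds.congr' ?_
        filter_upwards [Filter.eventually_ge_atTop (i + 1)] with k hk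
        exact (hsx k i hk).symm
      exact hc.mem_of_tendsto hx (Filter.Eventually.of_forall hsS)
    · left
      have hne : ∃ k, ¬ ∀ b : ℕ → ZMod p, ∃ s ∈ S, ∀ i < k, s i = b i :=
        not_forall.mp hfull
      have hm := Nat.find_spec hne
      have hpos : 0 < Nat.find hne := by
        rcases Nat.eq_zero_or_pos (Nat.find hne) with h | h
        · exfalso; apply hm; rw [h]
          exact fun b => ⟨0, S.zero_mem, fun i hi => absurd hi (Nat.not_lt_zero i)⟩
        · exact h
      have hPm : ∀ b : ℕ → ZMod p, ∃ s ∈ S, ∀ i < Nat.find hne - 1, s i = b i :=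
        not_not.mp (Nat.find_min hne (by omega))
      have hsucc : Nat.find hne - 1 + 1 = Nat.find hne := by omega
      exact natFinite p hp S hshift (Nat.find hne - 1) hPm (hsucc ▸ hm)
end
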